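/- arXiv:2212.06633 — 8 statements merged into one kernel-verified Lean document; each statement's English description precedes it below -/
import Mathlib

section
/- For every threshold θ ∈ {1,…,S} and every ρ ∈ (0,1], the function d^θ is a probability distribution on {1,…,S} (it is nonnegative and sums to 1) and it is stationary for the kernel P_θ, i.e. Σ_{s=1}^S d^θ(s)·P_θ(z | s) = d^θ(z) for every z ∈ {1,…,S}. -/
open Finset

/-- β_{θ,ρ} = 1/(θ-1+1/ρ) -/
noncomputable def bet (ρ : ℝ) (θ : ℕ) : ℝ := 1 / ((θ : ℝ) - 1 + 1 / ρ)

/-- Stationary distribution d^θ on {1,…,S} under the threshold policy θ;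
for θ = S+1 it is the point mass at S. -/
noncomputable def dstat (S : ℕ) (ρ : ℝ) (θ : ℕ) (z : ℕ) : ℝ :=
  if θ = S + 1 then (if z = S then 1 else 0)
  else if z < θ then bet ρ θ
  else if z < S then (1 - ρ) ^ (z - θ) * bet ρ θ
  else (1 - ρ) ^ (S - θ) * bet ρ θ / ρ

/-- Transition kernel of the AoI chain under the threshold policy π_θ
(activate iff s ≥ θ): P_θ(z | s). -/
noncomputable def Pker (S : ℕ) (ρ : ℝ) (θ : ℕ) (s z : ℕ) : ℝ :=
  if θ ≤ s then
    (if z = 1 then ρ else 0) + (if z = min (s + 1) S then 1 - ρ else 0)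
  else (if z = min (s + 1) S then 1 else 0)

/-- for θ ∈ {1,…,S} and ρ ∈ (0,1], d^θ is a probability
distribution on {1,…,S} and is stationary for P_θ. -/
theorem dstat_isStationaryDistribution
    (S : ℕ) (hS : 2 ≤ S) (ρ : ℝ) (hρ0 : 0 < ρ) (hρ1 : ρ ≤ 1)
    (θ : ℕ) (hθ : θ ∈ Finset.Icc 1 S) :
    (∀ z ∈ Finset.Icc 1 S, 0 ≤ dstat S ρ θ z) ∧
    (∑ z ∈ Finset.Icc 1 S, dstat S ρ θ z = 1) ∧
    (∀ z ∈ Finset.Icc 1 S,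
      ∑ s ∈ Finset.Icc 1 S, dstat S ρ θ s * Pker S ρ θ s z = dstat S ρ θ z) := by
  obtain ⟨hθ1, hθS⟩ := Finset.mem_Icc.mp hθ
  obtain ⟨T, rfl, hT1⟩ : ∃ T, S = T + 1 ∧ 1 ≤ T := ⟨S - 1, by omega, by omega⟩
  set S := T + 1 with hSdef
  have hne : θ ≠ S + 1 := by omega
  set β := bet ρ θ with hβ
  have hρ : ρ ≠ 0 := ne_of_gt hρ0
  have hq0 : (0:ℝ) ≤ 1 - ρ := by linarith
  have hden : (0:ℝ) < (θ:ℝ) - 1 + 1/ρ := by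
    have h1 : (0:ℝ) < 1/ρ := by positivity
    have h2 : (1:ℝ) ≤ (θ:ℝ) := by exact_mod_cast hθ1
    linarith
  have hβpos : 0 < β := by rw [hβ, bet]; positivity
  have hd : ∀ z, dstat S ρ θ z =
      if z < θ then β else if z < S then (1-ρ)^(z-θ)*β else (1-ρ)^(S-θ)*β/ρ := by
    intro z; simp only [dstat, if_neg hne, hβ]
  -- geometric tail sum
  have tail : ∑ s ∈ Finset.Icc θ S, dstat S ρ θ s = β / ρ := by
    rw [Finset.sum_Icc_succ_top (by omega : θ ≤ T + 1)]
    have h1 : ∑ s ∈ Finset.Icc θ T, dstat S ρ θ s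
        = (∑ s ∈ Finset.Icc θ T, (1-ρ)^(s-θ)) * β := by
      rw [Finset.sum_mul]
      refine Finset.sum_congr rfl (fun s hs => ?_)
      rw [Finset.mem_Icc] at hs
      rw [hd, if_neg (by omega), if_pos (by omega)]
    have h2 : ∑ s ∈ Finset.Icc θ T, (1-ρ)^(s-θ) = (1 - (1-ρ)^(S-θ)) / ρ := by
      rw [← Finset.Ico_add_one_right_eq_Icc, Finset.sum_Ico_eq_sum_range]
      have he : ∀ i, (1-ρ)^(θ + i - θ) = (1-ρ)^i := fun i => by
        congr 1; omega
      simp only [he]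
      rw [geom_sum_eq (by intro h; apply hρ; linarith : (1-ρ) ≠ 1)]
      have : T + 1 - θ = S - θ := by omega
      rw [this, div_eq_div_iff (by intro h; apply hρ; linarith) hρ]
      ring
    have h3 : dstat S ρ θ (T+1) = (1-ρ)^(S-θ)*β/ρ := by
      rw [hd, if_neg (by omega), if_neg (by omega)]
    rw [h1, h2, h3]
    field_simp
    ring
  have head : ∑ s ∈ Finset.Ico 1 θ, dstat S ρ θ s = ((θ:ℝ) - 1) * β := by
    have hc : ∀ s ∈ Finset.Ico 1 θ, dstat S ρ θ s = β := by
      intro s hs; rw [Finset.mem_Ico] at hs; rw [hd, if_pos hs.2]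
    rw [Finset.sum_congr rfl hc, Finset.sum_const, Nat.card_Ico, nsmul_eq_mul]
    congr 1
    push_cast [Nat.cast_sub hθ1]
    ring
  have hsum : ∑ z ∈ Finset.Icc 1 S, dstat S ρ θ z = 1 := by
    have hsplit := Finset.sum_Ico_consecutive (dstat S ρ θ)
      (by omega : 1 ≤ θ) (by omega : θ ≤ S + 1)
    simp only [Finset.Ico_add_one_right_eq_Icc] at hsplit
    rw [← hsplit, head, tail, hβ, bet]
    have hθR : (1:ℝ) ≤ (θ:ℝ) := by exact_mod_cast hθ1
    have hden' : ((θ:ℝ) - 1) * ρ + 1 ≠ 0 := by nlinarith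
    field_simp
  refine ⟨fun z _ => by rw [hd]; split_ifs <;> positivity, hsum, ?_⟩
  intro z hz
  rw [Finset.mem_Icc] at hz
  have hP : ∀ s, dstat S ρ θ s * Pker S ρ θ s z =
      (if z = 1 then (if θ ≤ s then dstat S ρ θ s * ρ else 0) else 0)
      + (if z = min (s+1) S then dstat S ρ θ s * (if θ ≤ s then 1-ρ else 1) else 0) := by
    intro s
    simp only [Pker]
    split_ifs <;> ring
  rw [Finset.sum_congr rfl (fun s _ => hP s), Finset.sum_add_distrib]
  have A1 : ∑ s ∈ Finset.Icc 1 S,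
      (if z = 1 then (if θ ≤ s then dstat S ρ θ s * ρ else 0) else 0)
      = if z = 1 then β else 0 := by
    by_cases hz1 : z = 1
    · rw [if_pos hz1]
      have hc : ∀ s ∈ Finset.Icc 1 S,
          (if z = 1 then (if θ ≤ s then dstat S ρ θ s * ρ else 0) else 0)
          = (if θ ≤ s then dstat S ρ θ s * ρ else 0) := fun s _ => if_pos hz1
      rw [Finset.sum_congr rfl hc]
      have hf : Finset.filter (fun s => θ ≤ s) (Finset.Icc 1 S) = Finset.Icc θ S := by
        ext s; simp only [Finset.mem_filter, Finset.mem_Icc]; omega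
      rw [← Finset.sum_filter, hf, ← Finset.sum_mul, tail]
      field_simp
    · simp [hz1]
  have A2 : ∑ s ∈ Finset.Icc 1 S,
      (if z = min (s+1) S then dstat S ρ θ s * (if θ ≤ s then 1-ρ else 1) else 0)
      = (if z - 1 ∈ Finset.Icc 1 T then
          dstat S ρ θ (z-1) * (if θ ≤ z-1 then 1-ρ else 1) else 0)
        + (if z = S then dstat S ρ θ S * (1-ρ) else 0) := by
    rw [Finset.sum_Icc_succ_top (by omega : 1 ≤ T + 1)]
    congr 1
    · have hcg : ∀ s ∈ Finset.Icc 1 T,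
          (if z = min (s+1) S then dstat S ρ θ s * (if θ ≤ s then 1-ρ else 1) else 0)
          = (if s = z - 1 then dstat S ρ θ s * (if θ ≤ s then 1-ρ else 1) else 0) := by
        intro s hs; rw [Finset.mem_Icc] at hs
        have hm : min (s+1) S = s + 1 := by omega
        rw [hm]
        exact if_congr (by omega) rfl rfl
      rw [Finset.sum_congr rfl hcg, Finset.sum_ite_eq']
    · have hm : min (T+1+1) S = S := by omega
      rw [hm, if_pos (by omega : θ ≤ T + 1)]
  rw [A1, A2]
  -- case analysis on z
  rcases Nat.lt_or_ge z 2 with hz2 | hz2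
  · -- z = 1
    have hz1 : z = 1 := by omega
    subst hz1
    rw [if_pos rfl, if_neg (show (1:ℕ) - 1 ∉ Finset.Icc 1 T by
        simp [Finset.mem_Icc]), if_neg (show (1:ℕ) ≠ S by omega)]
    rw [hd]
    by_cases h1θ : 1 < θ
    · rw [if_pos h1θ]; ring
    · rw [if_neg h1θ, if_pos (show 1 < S by omega),
        show 1 - θ = 0 from by omega, pow_zero]
      ring
  · rcases Nat.lt_or_ge z S with hzS | hzS
    · -- 2 ≤ z < S
      rw [if_neg (show z ≠ 1 by omega),
        if_pos (show z - 1 ∈ Finset.Icc 1 T from by rw [Finset.mem_Icc]; omega),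
        if_neg (show z ≠ S by omega)]
      rcases Nat.lt_or_ge (z-1) θ with hlt | hge
      · -- z - 1 < θ, i.e. z ≤ θ
        rw [hd (z-1), if_pos hlt, if_neg (show ¬ θ ≤ z - 1 by omega), hd z]
        rcases Nat.lt_or_ge z θ with h | h
        · rw [if_pos h]; ring
        · have hzθ : z = θ := by omega
          rw [if_neg (show ¬ z < θ by omega), if_pos hzS, hzθ, Nat.sub_self,
            pow_zero]
          ring
      · -- θ ≤ z - 1 < z < S
        have hge' : θ ≤ z - 1 := hge
        rw [hd (z-1), if_neg (show ¬ z - 1 < θ by omega),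
          if_pos (show z - 1 < S by omega), if_pos hge', hd z,
          if_neg (show ¬ z < θ by omega), if_pos hzS]
        have hp : (1-ρ)^(z-1-θ) * (1-ρ) = (1-ρ)^(z-θ) := by
          rw [← pow_succ]; congr 1; omega
        calc 0 + ((1-ρ)^(z-1-θ) * β * (1-ρ) + 0)
            = (1-ρ)^(z-1-θ) * (1-ρ) * β := by ring
          _ = (1-ρ)^(z-θ) * β := by rw [hp]
    · -- z = S
      have hzS' : z = S := by omega
      subst hzS'
      rw [if_neg (show S ≠ 1 by omega),
        if_pos (show S - 1 ∈ Finset.Icc 1 T from by rw [Finset.mem_Icc]; omega),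
        if_pos rfl]
      have hS1 : S - 1 = T := by omega
      rw [hS1, hd S, if_neg (show ¬ S < θ by omega),
        if_neg (show ¬ S < S by omega)]
      rcases Nat.lt_or_ge T θ with h | h
      · -- θ = S, T < θ
        rw [hd T, if_pos h, if_neg (show ¬ θ ≤ T by omega),
          show S - θ = 0 from by omega, pow_zero]
        field_simp
        ring
      · -- θ ≤ T
        have h' : θ ≤ T := h
        rw [hd T, if_neg (show ¬ T < θ by omega),
          if_pos (show T < S by omega), if_pos h']
        have hp : (1-ρ)^(T-θ) * (1-ρ) = (1-ρ)^(S-θ) := by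
          rw [← pow_succ]; congr 1; omega
        have he : (1-ρ)^(T-θ) * β * (1-ρ) = (1-ρ)^(S-θ) * β := by
          rw [← hp]; ring
        calc 0 + ((1-ρ)^(T-θ) * β * (1-ρ) + (1-ρ)^(S-θ) * β / ρ * (1-ρ))
            = (1-ρ)^(S-θ) * β + (1-ρ)^(S-θ) * β / ρ * (1-ρ) := by rw [he]; ring
          _ = (1-ρ)^(S-θ) * β / ρ := by field_simp; ring
end

section
/- Define the stationary activation frequency 𝒥_τ(θ) := Σ_{z=θ}^S d^θ(z) for θ ∈ {1,…,S} and 𝒥_τ(S+1) := 0. Then for every θ ∈ {1,…,S} and ρ ∈ (0,1], 𝒥_τ(θ) = β_{θ,ρ}/ρ = 1/(ρ(θ−1)+1), and the map θ ↦ 𝒥_τ(θ) is strictly decreasing on {1,…,S+1}. -/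
open Finset

/-- Stationary activation frequency 𝒥_τ(θ) = Σ_{z=θ}^S d^θ(z);
for θ = S+1 the range is empty so 𝒥_τ(S+1) = 0. -/
noncomputable def Jtau (S : ℕ) (ρ : ℝ) (θ : ℕ) : ℝ :=
  ∑ z ∈ Finset.Icc θ S, dstat S ρ θ z

lemma Jtau_eq (S : ℕ) (ρ : ℝ) (hρ0 : 0 < ρ) (θ : ℕ) (hθS : θ ≤ S) :
    Jtau S ρ θ = bet ρ θ / ρ := by
  have hne : θ ≠ S + 1 := by omega
  have key : ∀ z ∈ Finset.Ico θ S, dstat S ρ θ z = (1 - ρ) ^ (z - θ) * bet ρ θ := by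
    intro z hz
    simp only [Finset.mem_Ico] at hz
    simp [dstat, hne, Nat.not_lt.mpr hz.1, hz.2]
  have hS : dstat S ρ θ S = (1 - ρ) ^ (S - θ) * bet ρ θ / ρ := by
    simp [dstat, hne, Nat.not_lt.mpr hθS]
  have : Jtau S ρ θ = (∑ z ∈ Finset.Ico θ S, (1 - ρ) ^ (z - θ) * bet ρ θ)
      + (1 - ρ) ^ (S - θ) * bet ρ θ / ρ := by
    rw [Jtau, show Finset.Icc θ S = Finset.Ico θ (S + 1) by rw [Finset.Ico_add_one_right_eq_Icc],
      Finset.sum_Ico_succ_top hθS, Finset.sum_congr rfl key, hS]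
  rw [this, Finset.sum_Ico_eq_sum_range]
  have h2 : ∀ i ∈ Finset.range (S - θ), (1 - ρ) ^ (θ + i - θ) * bet ρ θ
      = (1 - ρ) ^ i * bet ρ θ := by
    intro i _; congr 1; congr 1; omega
  rw [Finset.sum_congr rfl h2, ← Finset.sum_mul, geom_sum_eq (by intro h; nlinarith [h]) ]
  have hρ : ρ ≠ 0 := ne_of_gt hρ0
  rw [show (1 - ρ) - 1 = -ρ by ring]
  field_simp
  ring

lemma bet_div (ρ : ℝ) (hρ0 : 0 < ρ) (θ : ℕ) (h1 : 1 ≤ θ) :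
    bet ρ θ / ρ = 1 / (ρ * ((θ : ℝ) - 1) + 1) := by
  have hρ : ρ ≠ 0 := ne_of_gt hρ0
  have hθ : (1 : ℝ) ≤ (θ : ℝ) := by exact_mod_cast h1
  have hd : (θ : ℝ) - 1 + 1 / ρ > 0 := by
    have := one_div_pos.mpr hρ0
    linarith
  rw [bet, div_div, one_div, one_div]
  congr 1
  field_simp


/-- 𝒥_τ(θ) = β_{θ,ρ}/ρ = 1/(ρ(θ-1)+1) on {1,…,S}, and
θ ↦ 𝒥_τ(θ) is strictly decreasing on {1,…,S+1}. -/
theorem Jtau_closed_form_and_strict_anti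
    (S : ℕ) (hS : 2 ≤ S) (ρ : ℝ) (hρ0 : 0 < ρ) (hρ1 : ρ ≤ 1) :
    (∀ θ ∈ Finset.Icc 1 S,
      Jtau S ρ θ = bet ρ θ / ρ ∧ Jtau S ρ θ = 1 / (ρ * ((θ : ℝ) - 1) + 1)) ∧
    (∀ θ ∈ Finset.Icc 1 (S + 1), ∀ θ' ∈ Finset.Icc 1 (S + 1),
      θ < θ' → Jtau S ρ θ' < Jtau S ρ θ) := by

  have hcf : ∀ θ, 1 ≤ θ → θ ≤ S → Jtau S ρ θ = 1 / (ρ * ((θ : ℝ) - 1) + 1) := by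
    intro θ h1 h2
    rw [Jtau_eq S ρ hρ0 θ h2, bet_div ρ hρ0 θ h1]
  have hden : ∀ θ : ℕ, 1 ≤ θ → (0 : ℝ) < ρ * ((θ : ℝ) - 1) + 1 := by
    intro θ h1
    have : (1 : ℝ) ≤ (θ : ℝ) := by exact_mod_cast h1
    nlinarith
  constructor
  · intro θ hθ
    simp only [Finset.mem_Icc] at hθ
    exact ⟨Jtau_eq S ρ hρ0 θ hθ.2, hcf θ hθ.1 hθ.2⟩
  · intro θ hθ θ' hθ' hlt
    simp only [Finset.mem_Icc] at hθ hθ'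
    have hθS : θ ≤ S := by omega
    rw [hcf θ hθ.1 hθS]
    rcases eq_or_lt_of_le hθ'.2 with h | h
    · have : Jtau S ρ θ' = 0 := by
        rw [h, Jtau, Finset.Icc_eq_empty (by omega), Finset.sum_empty]
      rw [this]
      exact one_div_pos.mpr (hden θ hθ.1)
    · have h2 : θ' ≤ S := by omega
      rw [hcf θ' hθ'.1 h2]
      apply one_div_lt_one_div_of_lt (hden θ hθ.1)
      have : (θ : ℝ) < (θ' : ℝ) := by exact_mod_cast hlt
      nlinarith
end

section
/- For every θ ∈ {1,…,S} and ρ ∈ (0,1], the distribution d^{θ+1} first-order stochastically dominates d^θ: for every x ∈ {1,…,S}, Σ_{z=x}^S d^{θ+1}(z) ≥ Σ_{z=x}^S d^θ(z). -/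
open Finset

/-! The tail sums `T_θ x = ∑ z ∈ Icc x S, d^θ z` have closed forms: `1 - (x - 1) β_θ` for
`x ≤ θ` (the total mass is `1` and every atom below the threshold equals `β_θ`), and the geometric
tail `β_θ (1 - ρ) ^ (x - θ) / ρ` for `θ ≤ x`. Dominance then reduces to `β_{θ+1} ≤ β_θ` below the
threshold and to `β_θ (1 - ρ) ≤ β_{θ+1}` above it. -/

lemma sum_Icc_eq_add_sum_Icc_succ {M : Type*} [AddCommMonoid M] (f : ℕ → M) {a b : ℕ}
    (h : a ≤ b) : ∑ z ∈ Icc a b, f z = f a + ∑ z ∈ Icc (a + 1) b, f z := by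
  rw [Icc_add_one_left_eq_Ioc, add_sum_Ioc_eq_sum_Icc h]

section bet

variable {ρ : ℝ} {θ : ℕ}

lemma bet_denom_pos (hρ : 0 < ρ) (hθ : 1 ≤ θ) : 0 < (θ : ℝ) - 1 + 1 / ρ := by
  have : (1 : ℝ) ≤ θ := by exact_mod_cast hθ
  have : 0 < 1 / ρ := by positivity
  linarith

lemma bet_pos (hρ : 0 < ρ) (hθ : 1 ≤ θ) : 0 < bet ρ θ :=
  one_div_pos.mpr (bet_denom_pos hρ hθ)

lemma sub_one_mul_bet_add_bet_div (hρ : 0 < ρ) (hθ : 1 ≤ θ) :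
    ((θ : ℝ) - 1) * bet ρ θ + bet ρ θ / ρ = 1 := by
  have h : bet ρ θ * ((θ : ℝ) - 1 + 1 / ρ) = 1 := one_div_mul_cancel (bet_denom_pos hρ hθ).ne'
  linear_combination h

lemma bet_succ_le (hρ : 0 < ρ) (hθ : 1 ≤ θ) : bet ρ (θ + 1) ≤ bet ρ θ := by
  unfold bet
  gcongr
  · exact bet_denom_pos hρ hθ
  · simp

lemma bet_mul_one_sub_le_bet_succ (hρ : 0 < ρ) (hθ : 1 ≤ θ) :
    bet ρ θ * (1 - ρ) ≤ bet ρ (θ + 1) := by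
  have h₁ := bet_denom_pos hρ hθ
  have h₂ := bet_denom_pos hρ (θ := θ + 1) (by omega)
  unfold bet
  rw [div_mul_eq_mul_div, div_le_div_iff₀ h₁ h₂]
  push_cast
  field_simp
  -- cleared of denominators this is `0 ≤ θ ρ²`
  nlinarith [mul_nonneg (mul_nonneg hρ.le hρ.le) (Nat.cast_nonneg θ : (0 : ℝ) ≤ θ)]

end bet

section dstat

variable {S : ℕ} {ρ : ℝ} {θ x z : ℕ}

lemma dstat_of_lt (hθS : θ ≤ S) (hz : z < θ) : dstat S ρ θ z = bet ρ θ := by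
  simp [dstat, show θ ≠ S + 1 by omega, hz]

lemma dstat_of_le_of_lt (hz : θ ≤ z) (hzS : z < S) :
    dstat S ρ θ z = (1 - ρ) ^ (z - θ) * bet ρ θ := by
  simp [dstat, show θ ≠ S + 1 by omega, hzS, not_lt.mpr hz]

lemma dstat_self (hθS : θ ≤ S) : dstat S ρ θ S = (1 - ρ) ^ (S - θ) * bet ρ θ / ρ := by
  simp [dstat, show θ ≠ S + 1 by omega, not_lt.mpr hθS]

lemma sum_Icc_dstat_succ_self (hxS : x ≤ S) :
    ∑ z ∈ Icc x S, dstat S ρ (S + 1) z = 1 := by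
  simp [dstat, hxS]

lemma sum_Icc_dstat_of_threshold_le (hρ : ρ ≠ 0) (hθS : θ ≤ S) (hθx : θ ≤ x) (hxS : x ≤ S) :
    ∑ z ∈ Icc x S, dstat S ρ θ z = bet ρ θ * (1 - ρ) ^ (x - θ) / ρ := by
  induction hxS using Nat.decreasingInduction with
  | self => rw [Icc_self, sum_singleton, dstat_self hθS]; ring
  | of_succ x hxS ih =>
    rw [sum_Icc_eq_add_sum_Icc_succ _ hxS.le, ih (by omega), dstat_of_le_of_lt hθx hxS,
      show x + 1 - θ = x - θ + 1 by omega, pow_succ]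
    field_simp
    ring

lemma sum_Icc_dstat_of_le_threshold (hρ : 0 < ρ) (hθ : 1 ≤ θ) (hθS : θ ≤ S) (hxθ : x ≤ θ) :
    ∑ z ∈ Icc x S, dstat S ρ θ z = 1 - ((x : ℝ) - 1) * bet ρ θ := by
  induction hxθ using Nat.decreasingInduction with
  | self =>
    rw [sum_Icc_dstat_of_threshold_le hρ.ne' hθS le_rfl hθS, Nat.sub_self, pow_zero]
    linear_combination sub_one_mul_bet_add_bet_div hρ hθ
  | of_succ x hxθ ih =>
    rw [sum_Icc_eq_add_sum_Icc_succ _ (by omega), ih, dstat_of_lt hθS hxθ]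
    push_cast
    ring

end dstat

theorem dstat_stochastic_dominance_general
    (S : ℕ) (ρ : ℝ) (hρ0 : 0 < ρ) (hρ1 : ρ ≤ 1)
    (θ : ℕ) (hθ : θ ∈ Finset.Icc 1 S) :
    ∀ x ∈ Finset.Icc 1 S,
      ∑ z ∈ Finset.Icc x S, dstat S ρ θ z ≤
        ∑ z ∈ Finset.Icc x S, dstat S ρ (θ + 1) z := by
  obtain ⟨hθ1, hθS⟩ := mem_Icc.mp hθ
  intro x hx
  obtain ⟨hx1, hxS⟩ := mem_Icc.mp hx
  rcases le_or_gt x θ with hxθ | hθx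
  · rw [sum_Icc_dstat_of_le_threshold hρ0 hθ1 hθS hxθ]
    have hx1' : (0 : ℝ) ≤ x - 1 := by simp [hx1]
    rcases hθS.eq_or_lt with rfl | hθS
    · rw [sum_Icc_dstat_succ_self hxS]
      exact sub_le_self _ (mul_nonneg hx1' (bet_pos hρ0 hθ1).le)
    · rw [sum_Icc_dstat_of_le_threshold hρ0 (by omega) hθS (by omega)]
      gcongr
      exact bet_succ_le hρ0 hθ1
  · rw [sum_Icc_dstat_of_threshold_le hρ0.ne' hθS hθx.le hxS,
      sum_Icc_dstat_of_threshold_le hρ0.ne' (by omega) hθx hxS,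
      show x - θ = x - (θ + 1) + 1 by omega, pow_succ', ← mul_assoc]
    have : 0 ≤ 1 - ρ := sub_nonneg.mpr hρ1
    gcongr
    exact bet_mul_one_sub_le_bet_succ hρ0 hθ1

/-- d^{θ+1} first-order stochastically dominates d^θ. -/
theorem dstat_stochastic_dominance
    (S : ℕ) (hS : 2 ≤ S) (ρ : ℝ) (hρ0 : 0 < ρ) (hρ1 : ρ ≤ 1)
    (θ : ℕ) (hθ : θ ∈ Finset.Icc 1 S) :
    ∀ x ∈ Finset.Icc 1 S,
      ∑ z ∈ Finset.Icc x S, dstat S ρ θ z ≤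
        ∑ z ∈ Finset.Icc x S, dstat S ρ (θ + 1) z :=
  dstat_stochastic_dominance_general S ρ hρ0 hρ1 θ hθ
end

section
/- The average cost J(θ,λ) satisfies the subadditivity inequality: for all thresholds θ, θ' ∈ {1,…,S+1} with θ' ≥ θ and all λ, λ' ∈ ℝ with λ' ≥ λ, J(θ', λ') − J(θ', λ) ≤ J(θ, λ') − J(θ, λ). -/
open Finset

/-- Average cost J(θ,λ) = Σ_z d^θ(z)h(z) + (λ+τ)·Σ_{z=θ}^S d^θ(z). -/
noncomputable def Jcost (S : ℕ) (ρ : ℝ) (h : ℕ → ℝ) (τ : ℝ) (θ : ℕ) (lam : ℝ) : ℝ :=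
  (∑ z ∈ Finset.Icc 1 S, dstat S ρ θ z * h z)
    + (lam + τ) * ∑ z ∈ Finset.Icc θ S, dstat S ρ θ z

/-- The tail sum of the stationary distribution equals β_{θ,ρ}/ρ = 1/(ρ(θ-1)+1). -/
lemma tail_sum (S : ℕ) (ρ : ℝ) (hρ0 : 0 < ρ) (θ : ℕ) (h1 : 1 ≤ θ) (h2 : θ ≤ S) :
    ∑ z ∈ Finset.Icc θ S, dstat S ρ θ z = 1 / (ρ * ((θ : ℝ) - 1) + 1) := by
  have hne : θ ≠ S + 1 := by omega
  have hIcc : Finset.Icc θ S = Finset.Ico θ (S + 1) := by rw [Finset.Ico_add_one_right_eq_Icc]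
  rw [hIcc, Finset.sum_Ico_succ_top h2]
  have hS : dstat S ρ θ S = (1 - ρ) ^ (S - θ) * bet ρ θ / ρ := by
    simp [dstat, hne, Nat.not_lt.mpr h2]
  have hmid : ∀ z ∈ Finset.Ico θ S, dstat S ρ θ z = (1 - ρ) ^ (z - θ) * bet ρ θ := by
    intro z hz
    rw [Finset.mem_Ico] at hz
    simp [dstat, hne, Nat.not_lt.mpr hz.1, hz.2]
  rw [Finset.sum_congr rfl hmid, hS]
  rw [Finset.sum_Ico_eq_sum_range]
  have hre : ∀ i ∈ Finset.range (S - θ), (1 - ρ) ^ (θ + i - θ) * bet ρ θ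
      = (1 - ρ) ^ i * bet ρ θ := by
    intro i _; congr 2; omega
  rw [Finset.sum_congr rfl hre, ← Finset.sum_mul]
  have hx : (1 - ρ) ≠ 1 := by intro hc; nlinarith
  rw [geom_sum_eq hx]
  have hρne : ρ ≠ 0 := ne_of_gt hρ0
  have hθ1 : (1:ℝ) ≤ (θ : ℝ) := by exact_mod_cast h1
  have hiρ : 0 < 1 / ρ := by positivity
  have hden : (θ : ℝ) - 1 + 1 / ρ ≠ 0 := by intro hc; nlinarith
  have hden2 : ρ * ((θ : ℝ) - 1) + 1 ≠ 0 := by nlinarith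
  have key : bet ρ θ / ρ = 1 / (ρ * ((θ : ℝ) - 1) + 1) := by
    have hmul : ((θ : ℝ) - 1 + 1 / ρ) * ρ = ρ * ((θ : ℝ) - 1) + 1 := by
      field_simp
    rw [bet, div_div, hmul]
  rw [← key]
  have hx' : (1 - ρ) - 1 ≠ 0 := by intro hc; apply hρne; linarith
  have hfrac : ((1 - ρ) ^ (S - θ) - 1) / ((1 - ρ) - 1)
      = (1 - (1 - ρ) ^ (S - θ)) / ρ := by
    rw [div_eq_div_iff hx' hρne]; ring
  rw [hfrac, div_mul_eq_mul_div, ← add_div]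
  congr 1
  ring

/-- subadditivity of the average cost J(θ,λ). -/
theorem Jcost_subadditive
    (S : ℕ) (hS : 2 ≤ S) (ρ : ℝ) (hρ0 : 0 < ρ) (hρ1 : ρ ≤ 1)
    (h : ℕ → ℝ) (τ : ℝ)
    (θ θ' : ℕ) (hθ : θ ∈ Finset.Icc 1 (S + 1)) (hθ' : θ' ∈ Finset.Icc 1 (S + 1))
    (hle : θ ≤ θ')
    (lam lam' : ℝ) (hlam : lam ≤ lam') :
    Jcost S ρ h τ θ' lam' - Jcost S ρ h τ θ' lam ≤
      Jcost S ρ h τ θ lam' - Jcost S ρ h τ θ lam := by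
  rw [Finset.mem_Icc] at hθ hθ'
  have hdiff : ∀ t : ℕ, Jcost S ρ h τ t lam' - Jcost S ρ h τ t lam
      = (lam' - lam) * ∑ z ∈ Finset.Icc t S, dstat S ρ t z := by
    intro t; simp only [Jcost]; ring
  rw [hdiff, hdiff]
  apply mul_le_mul_of_nonneg_left _ (by linarith)
  -- tail sums are monotone decreasing in θ
  have hθc : (1:ℝ) ≤ (θ : ℝ) := by exact_mod_cast hθ.1
  by_cases hc : θ' = S + 1
  · have hempty : Finset.Icc θ' S = ∅ := by
      apply Finset.Icc_eq_empty; omega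
    rw [hempty, Finset.sum_empty]
    by_cases hc2 : θ = S + 1
    · have hempty2 : Finset.Icc θ S = ∅ := by
        apply Finset.Icc_eq_empty; omega
      rw [hempty2, Finset.sum_empty]
    · have hθS : θ ≤ S := by omega
      rw [tail_sum S ρ hρ0 θ hθ.1 hθS]
      have : (0:ℝ) < ρ * ((θ:ℝ) - 1) + 1 := by nlinarith
      positivity
  · have hθ'S : θ' ≤ S := by omega
    have hθS : θ ≤ S := by omega
    rw [tail_sum S ρ hρ0 θ hθ.1 hθS, tail_sum S ρ hρ0 θ' hθ'.1 hθ'S]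
    have hpos : (0:ℝ) < ρ * ((θ:ℝ) - 1) + 1 := by nlinarith
    apply one_div_le_one_div_of_le hpos
    have : (θ:ℝ) ≤ (θ':ℝ) := by exact_mod_cast hle
    nlinarith
end

section
/- For every fixed θ ∈ {1,…,S}, the gap λ ↦ J(θ+1,λ) − J(θ,λ) is nonincreasing in λ: for all λ, λ' ∈ ℝ with λ ≤ λ', J(θ+1,λ') − J(θ,λ') ≤ J(θ+1,λ) − J(θ,λ). -/
open Finset

lemma bet_pos_s12 (ρ : ℝ) (hρ0 : 0 < ρ) (hρ1 : ρ ≤ 1) (θ : ℕ) (h1 : 1 ≤ θ) :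
    0 < bet ρ θ := by
  have h1' : (1 : ℝ) ≤ θ := by exact_mod_cast h1
  have : (1 : ℝ) ≤ 1 / ρ := by
    rw [le_div_iff₀ hρ0]; linarith
  unfold bet
  apply one_div_pos.mpr
  linarith

lemma sum_dstat (S : ℕ) (ρ : ℝ) (hρ0 : 0 < ρ) (θ : ℕ) (h1 : 1 ≤ θ) (h2 : θ ≤ S) :
    ∑ z ∈ Finset.Icc θ S, dstat S ρ θ z = bet ρ θ / ρ := by
  have hne : θ ≠ S + 1 := by omega
  have hsplit : Finset.Icc θ S = insert S (Finset.Icc θ (S - 1)) := by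
    ext x
    simp only [Finset.mem_insert, Finset.mem_Icc]
    omega
  have hSnot : S ∉ Finset.Icc θ (S - 1) := by
    simp only [Finset.mem_Icc]; omega
  rw [hsplit, Finset.sum_insert hSnot]
  have hdS : dstat S ρ θ S = (1 - ρ) ^ (S - θ) * bet ρ θ / ρ := by
    unfold dstat
    rw [if_neg hne, if_neg (by omega), if_neg (by omega)]
  have hd : ∀ z ∈ Finset.Icc θ (S - 1), dstat S ρ θ z = (1 - ρ) ^ (z - θ) * bet ρ θ := by
    intro z hz
    simp only [Finset.mem_Icc] at hz
    unfold dstat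
    rw [if_neg hne, if_neg (by omega), if_pos (by omega)]
  rw [hdS, Finset.sum_congr rfl hd]
  have hre : ∑ z ∈ Finset.Icc θ (S - 1), (1 - ρ) ^ (z - θ) * bet ρ θ
      = (∑ i ∈ Finset.range (S - θ), (1 - ρ) ^ i) * bet ρ θ := by
    rw [← Finset.sum_mul]
    congr 1
    have hIc : Finset.Icc θ (S - 1) = Finset.Ico θ S := by
      ext x; simp only [Finset.mem_Icc, Finset.mem_Ico]; omega
    rw [hIc, Finset.sum_Ico_eq_sum_range]
    exact Finset.sum_congr rfl fun i _ => by congr 1; omega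
  rw [hre]
  have hx : (1 : ℝ) - ρ ≠ 1 := by intro hc; nlinarith
  rw [geom_sum_eq hx]
  have hρ : ρ ≠ 0 := ne_of_gt hρ0
  have hρi : ρ * ρ⁻¹ = 1 := mul_inv_cancel₀ hρ
  field_simp
  linear_combination

/-- the gap λ ↦ J(θ+1,λ) - J(θ,λ) is nonincreasing in λ. -/
theorem Jcost_gap_antitone
    (S : ℕ) (hS : 2 ≤ S) (ρ : ℝ) (hρ0 : 0 < ρ) (hρ1 : ρ ≤ 1)
    (h : ℕ → ℝ) (τ : ℝ)
    (θ : ℕ) (hθ : θ ∈ Finset.Icc 1 S)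
    (lam lam' : ℝ) (hlam : lam ≤ lam') :
    Jcost S ρ h τ (θ + 1) lam' - Jcost S ρ h τ θ lam' ≤
      Jcost S ρ h τ (θ + 1) lam - Jcost S ρ h τ θ lam := by
  simp only [Finset.mem_Icc] at hθ
  obtain ⟨hθ1, hθS⟩ := hθ
  set A0 := ∑ z ∈ Finset.Icc θ S, dstat S ρ θ z with hA0
  set A1 := ∑ z ∈ Finset.Icc (θ + 1) S, dstat S ρ (θ + 1) z with hA1
  have hA0v : A0 = bet ρ θ / ρ := sum_dstat S ρ hρ0 θ hθ1 hθS
  have hle : A1 ≤ A0 := by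
    rcases eq_or_lt_of_le hθS with heq | hlt
    · have : Finset.Icc (θ + 1) S = ∅ := by
        rw [Finset.Icc_eq_empty_iff]; omega
      rw [hA1, this, Finset.sum_empty, hA0v]
      have := bet_pos_s12 ρ hρ0 hρ1 θ hθ1
      positivity
    · rw [hA0v, hA1, sum_dstat S ρ hρ0 (θ + 1) (by omega) (by omega)]
      gcongr
      unfold bet
      apply one_div_le_one_div_of_le
      · have h1' : (1 : ℝ) ≤ θ := by exact_mod_cast hθ1
        have : (1 : ℝ) ≤ 1 / ρ := by rw [le_div_iff₀ hρ0]; linarith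
        linarith
      · push_cast; linarith
  unfold Jcost
  nlinarith [mul_nonneg (sub_nonneg.mpr hlam) (sub_nonneg.mpr hle)]
end

section
/- (Performance difference formula.) Let 𝕊 and 𝔸 be finite nonempty sets, P : 𝕊 × 𝔸 → (probability distributions on 𝕊) a transition kernel, c : 𝕊 × 𝔸 → ℝ a cost function, and π₁, π₂ : 𝕊 → 𝔸 two policies. Suppose d₁ is a probability distribution on 𝕊 that is stationary under π₁, i.e. Σ_{s} d₁(s)·P(z | s, π₁(s)) = d₁(z) for all z ∈ 𝕊; let J₁ := Σ_{s} d₁(s)·c(s, π₁(s)); and suppose J₂ ∈ ℝ and Q₂ : 𝕊 × 𝔸 → ℝ satisfy the Bellman equation for π₂: Q₂(s,a) = c(s,a) − J₂ + Σ_{s'} P(s' | s, a)·Q₂(s', π₂(s')) for all (s,a) ∈ 𝕊 × 𝔸. Then J₁ − J₂ = Σ_{s} d₁(s)·[Q₂(s, π₁(s)) − Q₂(s, π₂(s))]. -/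
open Finset

/-
Average the Bellman equation of `π₂` at the actions of `π₁` against `d₁`. The cost term gives
`J₁`, the constant gives `J₂` because `d₁` has mass one, and stationarity of `d₁` under `π₁`
turns the averaged one-step expectation of `Q₂(·, π₂ ·)` back into its `d₁`-average, which is
the subtracted term of the formula.
-/

section Stationary

variable {ι R : Type*} [Fintype ι] [CommRing R]

theorem sum_mul_sum_kernel_eq_of_stationary {d : ι → R} {K : ι → ι → R}
    (hstat : ∀ z, ∑ s, d s * K s z = d z) (f : ι → R) :
    ∑ s, d s * ∑ s', K s s' * f s' = ∑ s, d s * f s := by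
  simp only [mul_sum, ← mul_assoc]
  rw [sum_comm]
  simp only [← sum_mul, hstat]

theorem sum_mul_bellman_eq_of_stationary {𝔸 : Type*} {P : ι → 𝔸 → ι → R} {c Q : ι → 𝔸 → R}
    {π : ι → 𝔸} {d V : ι → R} {J : R} (hsum : ∑ s, d s = 1)
    (hstat : ∀ z, ∑ s, d s * P s (π s) z = d z)
    (hQ : ∀ s a, Q s a = c s a - J + ∑ s', P s a s' * V s') :
    ∑ s, d s * Q s (π s) = ∑ s, d s * c s (π s) - J + ∑ s, d s * V s := by
  simp only [hQ, mul_add, mul_sub, sum_add_distrib, sum_sub_distrib, ← sum_mul, hsum, one_mul,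
    sum_mul_sum_kernel_eq_of_stationary hstat]

end Stationary

theorem performance_difference_general
    {𝕊 𝔸 : Type*} [Fintype 𝕊]
    (P : 𝕊 → 𝔸 → 𝕊 → ℝ)
    (c : 𝕊 → 𝔸 → ℝ) (π₁ π₂ : 𝕊 → 𝔸)
    (d₁ : 𝕊 → ℝ)
    (hd₁sum : ∑ s : 𝕊, d₁ s = 1)
    (hstat : ∀ z : 𝕊, ∑ s : 𝕊, d₁ s * P s (π₁ s) z = d₁ z)
    (J₁ : ℝ) (hJ₁ : J₁ = ∑ s : 𝕊, d₁ s * c s (π₁ s))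
    (J₂ : ℝ) (Q₂ : 𝕊 → 𝔸 → ℝ)
    (hBellman : ∀ s a, Q₂ s a = c s a - J₂ + ∑ s' : 𝕊, P s a s' * Q₂ s' (π₂ s')) :
    J₁ - J₂ = ∑ s : 𝕊, d₁ s * (Q₂ s (π₁ s) - Q₂ s (π₂ s)) := by
  have averaged := sum_mul_bellman_eq_of_stationary hd₁sum hstat hBellman
  simp only [mul_sub, sum_sub_distrib, averaged, hJ₁]
  ring

/-- STATEMENT 13 (Performance difference formula) for a finite MDP. -/
theorem performance_difference
    {𝕊 𝔸 : Type*} [Fintype 𝕊] [Nonempty 𝕊] [Fintype 𝔸] [Nonempty 𝔸]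
    (P : 𝕊 → 𝔸 → 𝕊 → ℝ)
    (hPnn : ∀ s a s', 0 ≤ P s a s')
    (hPsum : ∀ s a, ∑ s' : 𝕊, P s a s' = 1)
    (c : 𝕊 → 𝔸 → ℝ) (π₁ π₂ : 𝕊 → 𝔸)
    (d₁ : 𝕊 → ℝ)
    (hd₁nn : ∀ s, 0 ≤ d₁ s)
    (hd₁sum : ∑ s : 𝕊, d₁ s = 1)
    (hstat : ∀ z : 𝕊, ∑ s : 𝕊, d₁ s * P s (π₁ s) z = d₁ z)
    (J₁ : ℝ) (hJ₁ : J₁ = ∑ s : 𝕊, d₁ s * c s (π₁ s))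
    (J₂ : ℝ) (Q₂ : 𝕊 → 𝔸 → ℝ)
    (hBellman : ∀ s a, Q₂ s a = c s a - J₂ + ∑ s' : 𝕊, P s a s' * Q₂ s' (π₂ s')) :
    J₁ - J₂ = ∑ s : 𝕊, d₁ s * (Q₂ s (π₁ s) - Q₂ s (π₂ s)) :=
  performance_difference_general P c π₁ π₂ d₁ hd₁sum hstat J₁ hJ₁ J₂ Q₂ hBellman
end

section
/- (Performance difference for neighboring thresholds.) Fix θ ∈ {1,…,S}, λ ∈ ℝ, and let c_λ(s,a) := h(s) + (τ+λ)·a. Suppose J_θ ∈ ℝ and Q : {1,…,S} × {0,1} → ℝ satisfy the Bellman equation for the threshold policy π_θ: Q(s,a) = c_λ(s,a) − J_θ + E_{s'}[Q(s', π_θ(s'))], where s' = 1 with probability ρ and s' = min(s+1,S) with probability 1−ρ if a = 1, and s' = min(s+1,S) if a = 0. Let J_{θ+1} := Σ_{z=1}^S d^{θ+1}(z)·c_λ(z, π_{θ+1}(z)). Then J_{θ+1} − J_θ = d^{θ+1}(θ)·[Q(θ,0) − Q(θ,1)]. -/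
open Finset

/-- Threshold policy: activate (a = 1) iff s ≥ θ. -/
def pol (θ s : ℕ) : ℕ := if θ ≤ s then 1 else 0

private lemma tailsum (S θ : ℕ) (ρ : ℝ) (hρ0 : 0 < ρ) (hθS : θ + 1 ≤ S) :
    ∑ z ∈ Icc (θ+1) S, dstat S ρ (θ+1) z = bet ρ (θ+1) / ρ := by
  have hq : (1 - ρ) ≠ 1 := by intro hh; nlinarith
  have hins : Icc (θ+1) S = insert S (Ico (θ+1) S) := by
    ext z; simp only [mem_Icc, mem_insert, mem_Ico]; omega
  rw [hins, sum_insert (by simp [mem_Ico])]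
  have h1 : dstat S ρ (θ+1) S = (1-ρ)^(S - (θ+1)) * bet ρ (θ+1) / ρ := by
    unfold dstat; rw [if_neg (by omega), if_neg (by omega), if_neg (by omega)]
  have h2 : ∀ z ∈ Ico (θ+1) S, dstat S ρ (θ+1) z = (1-ρ)^(z-(θ+1)) * bet ρ (θ+1) := by
    intro z hz; simp only [mem_Ico] at hz
    unfold dstat; rw [if_neg (by omega), if_neg (by omega), if_pos (by omega)]
  rw [h1, sum_congr rfl h2, sum_Ico_eq_sum_range]
  simp only [Nat.add_sub_cancel_left]
  rw [← sum_mul, geom_sum_eq hq]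
  have hρ : ρ ≠ 0 := ne_of_gt hρ0
  rw [show (1-ρ:ℝ) - 1 = -ρ from by ring]
  field_simp
  ring

private lemma totalsum (S θ : ℕ) (ρ : ℝ) (hρ0 : 0 < ρ) (hθ1 : 1 ≤ θ) (hθS : θ + 1 ≤ S) :
    ∑ z ∈ Icc 1 S, dstat S ρ (θ+1) z = 1 := by
  have hρ : ρ ≠ 0 := ne_of_gt hρ0
  have e1 : Icc 1 S = Ioc 0 S := by ext z; simp only [mem_Icc, mem_Ioc]; omega
  have e2 : Icc (θ+1) S = Ioc θ S := by ext z; simp only [mem_Icc, mem_Ioc]; omega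
  have e3 : Icc 1 θ = Ioc 0 θ := by ext z; simp only [mem_Icc, mem_Ioc]; omega
  rw [e1, ← Finset.sum_Ioc_consecutive _ (Nat.zero_le θ) (by omega : θ ≤ S)]
  have hhead : ∑ z ∈ Ioc 0 θ, dstat S ρ (θ+1) z = θ * bet ρ (θ+1) := by
    have : ∀ z ∈ Ioc 0 θ, dstat S ρ (θ+1) z = bet ρ (θ+1) := by
      intro z hz; simp only [mem_Ioc] at hz
      unfold dstat; rw [if_neg (by omega), if_pos (by omega)]
    rw [sum_congr rfl this, sum_const, Nat.card_Ioc, nsmul_eq_mul]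
    norm_num
  have htail := tailsum S θ ρ hρ0 hθS
  rw [e2] at htail
  rw [hhead, htail]
  unfold bet
  have hden : ((θ:ℝ) + 1) - 1 + 1/ρ = θ + 1/ρ := by ring
  push_cast
  rw [hden]
  have hpos : (0:ℝ) < (θ:ℝ) + 1/ρ := by positivity
  field_simp

private lemma flow (S θ : ℕ) (hS : 2 ≤ S) (hθ1 : 1 ≤ θ) (hθS : θ + 1 ≤ S)
    (ρ : ℝ) (hρ0 : 0 < ρ) (w : ℕ) (hw1 : 1 ≤ w) (hwS : w ≤ S) :
    ∑ z ∈ Icc 1 S, dstat S ρ (θ+1) z *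
      (if θ+1 ≤ z then
        ρ * (if w = 1 then (1:ℝ) else 0) + (1-ρ) * (if w = min (z+1) S then (1:ℝ) else 0)
       else (if w = min (z+1) S then (1:ℝ) else 0))
    = dstat S ρ (θ+1) w := by
  have hρ : ρ ≠ 0 := ne_of_gt hρ0
  have hD1 : ∀ z, z ≤ θ → dstat S ρ (θ+1) z = bet ρ (θ+1) := by
    intro z hz; unfold dstat; rw [if_neg (by omega), if_pos (by omega)]
  have hD2 : ∀ z, θ+1 ≤ z → z < S → dstat S ρ (θ+1) z = (1-ρ)^(z-(θ+1)) * bet ρ (θ+1) := by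
    intro z h1 h2; unfold dstat; rw [if_neg (by omega), if_neg (by omega), if_pos h2]
  have hD3 : dstat S ρ (θ+1) S = (1-ρ)^(S-(θ+1)) * bet ρ (θ+1) / ρ := by
    unfold dstat; rw [if_neg (by omega), if_neg (by omega), if_neg (by omega)]
  by_cases hw : w = 1
  · subst hw
    have hterm : ∀ z ∈ Icc 1 S, dstat S ρ (θ+1) z *
        (if θ+1 ≤ z then
          ρ * (if (1:ℕ) = 1 then (1:ℝ) else 0) + (1-ρ) * (if (1:ℕ) = min (z+1) S then (1:ℝ) else 0)
         else (if (1:ℕ) = min (z+1) S then (1:ℝ) else 0))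
        = if θ+1 ≤ z then dstat S ρ (θ+1) z * ρ else 0 := by
      intro z hz; simp only [mem_Icc] at hz
      have hmin : ¬ ((1:ℕ) = min (z+1) S) := by omega
      rw [if_neg hmin, if_pos rfl]
      by_cases hc : θ+1 ≤ z
      · rw [if_pos hc, if_pos hc]; ring
      · rw [if_neg hc, if_neg hc]; ring
    rw [sum_congr rfl hterm, ← sum_filter]
    have hfil : (Icc 1 S).filter (fun z => θ+1 ≤ z) = Icc (θ+1) S := by
      ext z; simp only [mem_filter, mem_Icc]; omega
    rw [hfil, ← sum_mul, tailsum S θ ρ hρ0 hθS, div_mul_cancel₀ _ hρ, hD1 1 hθ1]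
  · by_cases hwS' : w < S
    · rw [Finset.sum_eq_single_of_mem (w-1) (by simp only [mem_Icc]; omega)
        (fun z hz hne => by
          simp only [mem_Icc] at hz
          have hmin : ¬ (w = min (z+1) S) := by omega
          rw [if_neg hmin, if_neg hw]
          by_cases hc : θ+1 ≤ z
          · rw [if_pos hc]; ring
          · rw [if_neg hc]; ring)]
      have hmin : min (w-1+1) S = w := by omega
      rw [hmin, if_pos rfl, if_neg hw]
      by_cases hc : θ+1 ≤ w-1
      · rw [if_pos hc, hD2 (w-1) hc (by omega), hD2 w (by omega) hwS']
        have he : w - (θ+1) = (w-1-(θ+1)) + 1 := by omega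
        rw [he, pow_succ]; ring
      · rw [if_neg hc, hD1 (w-1) (by omega)]
        by_cases hc2 : w ≤ θ
        · rw [hD1 w hc2]; ring
        · rw [hD2 w (by omega) hwS']
          have he : w - (θ+1) = 0 := by omega
          rw [he, pow_zero]; ring
    · have hwS2 : w = S := by omega
      rw [hwS2]
      have hins : Icc 1 S = insert S (insert (S-1) (Icc 1 (S-2))) := by
        ext z; simp only [mem_Icc, mem_insert]; omega
      rw [hins, sum_insert (by simp only [mem_insert, mem_Icc]; omega),
        sum_insert (by simp only [mem_Icc]; omega)]
      have hzero : ∑ z ∈ Icc 1 (S-2), dstat S ρ (θ+1) z *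
          (if θ+1 ≤ z then
            ρ * (if S = 1 then (1:ℝ) else 0) + (1-ρ) * (if S = min (z+1) S then (1:ℝ) else 0)
           else (if S = min (z+1) S then (1:ℝ) else 0)) = 0 := by
        apply Finset.sum_eq_zero
        intro z hz; simp only [mem_Icc] at hz
        have hmin : ¬ (S = min (z+1) S) := by omega
        rw [if_neg hmin, if_neg (by omega : ¬ (S = 1))]
        by_cases hc : θ+1 ≤ z
        · rw [if_pos hc]; ring
        · rw [if_neg hc]; ring
      rw [hzero]
      have hminS : min (S+1) S = S := by omega
      have hminS1 : min (S-1+1) S = S := by omega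
      rw [hminS, hminS1, if_pos rfl, if_pos hθS, if_neg (by omega : ¬ (S = 1))]
      by_cases hc : θ+1 ≤ S-1
      · rw [if_pos hc, hD2 (S-1) hc (by omega), hD3]
        have he : S - (θ+1) = (S-1-(θ+1)) + 1 := by omega
        rw [he, pow_succ]
        field_simp
        ring
      · rw [if_neg hc, hD1 (S-1) (by omega), hD3]
        have he : S - (θ+1) = 0 := by omega
        rw [he, pow_zero]
        field_simp
        ring

private lemma stationary (S θ : ℕ) (hS : 2 ≤ S) (hθ1 : 1 ≤ θ) (hθS : θ + 1 ≤ S)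
    (ρ : ℝ) (hρ0 : 0 < ρ) (f : ℕ → ℝ) :
    ∑ z ∈ Icc 1 S, dstat S ρ (θ+1) z *
      (if θ+1 ≤ z then ρ * f 1 + (1-ρ) * f (min (z+1) S) else f (min (z+1) S))
    = ∑ z ∈ Icc 1 S, dstat S ρ (θ+1) z * f z := by
  have key : ∀ c, 1 ≤ c → c ≤ S →
      (∑ w ∈ Icc 1 S, (if w = c then (1:ℝ) else 0) * f w) = f c := by
    intro c h1 h2
    rw [sum_congr rfl (fun w _ => by rw [ite_mul, one_mul, zero_mul]), Finset.sum_ite_eq',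
      if_pos (by simp only [mem_Icc]; omega : c ∈ Icc 1 S)]
  calc ∑ z ∈ Icc 1 S, dstat S ρ (θ+1) z *
        (if θ+1 ≤ z then ρ * f 1 + (1-ρ) * f (min (z+1) S) else f (min (z+1) S))
      = ∑ z ∈ Icc 1 S, ∑ w ∈ Icc 1 S, dstat S ρ (θ+1) z *
          ((if θ+1 ≤ z then
              ρ * (if w = 1 then (1:ℝ) else 0) + (1-ρ) * (if w = min (z+1) S then (1:ℝ) else 0)
            else (if w = min (z+1) S then (1:ℝ) else 0)) * f w) := by
        apply sum_congr rfl; intro z hz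
        simp only [mem_Icc] at hz
        rw [← mul_sum]
        congr 1
        by_cases hc : θ+1 ≤ z
        · simp only [hc, if_true]
          have e1 : ∀ w, ((ρ * (if w = 1 then (1:ℝ) else 0) + (1-ρ) * (if w = min (z+1) S then (1:ℝ) else 0)) * f w)
              = ρ * ((if w = 1 then (1:ℝ) else 0) * f w) + (1-ρ) * ((if w = min (z+1) S then (1:ℝ) else 0) * f w) :=
            fun w => by ring
          rw [sum_congr rfl fun w _ => e1 w, sum_add_distrib, ← mul_sum, ← mul_sum,
            key 1 le_rfl (by omega), key (min (z+1) S) (by omega) (by omega)]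
        · simp only [hc, if_false]
          rw [key (min (z+1) S) (by omega) (by omega)]
    _ = ∑ w ∈ Icc 1 S, ∑ z ∈ Icc 1 S, dstat S ρ (θ+1) z *
          ((if θ+1 ≤ z then
              ρ * (if w = 1 then (1:ℝ) else 0) + (1-ρ) * (if w = min (z+1) S then (1:ℝ) else 0)
            else (if w = min (z+1) S then (1:ℝ) else 0)) * f w) := Finset.sum_comm
    _ = ∑ w ∈ Icc 1 S, dstat S ρ (θ+1) w * f w := by
        apply sum_congr rfl; intro w hw
        simp only [mem_Icc] at hw
        rw [sum_congr rfl (fun z _ => (mul_assoc _ _ _).symm), ← sum_mul,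
          flow S θ hS hθ1 hθS ρ hρ0 w hw.1 hw.2]

/-- Performance difference for neighboring thresholds. -/
theorem performance_difference_neighboring_thresholds
    (S : ℕ) (hS : 2 ≤ S) (ρ : ℝ) (hρ0 : 0 < ρ) (hρ1 : ρ ≤ 1)
    (h : ℕ → ℝ) (τ lam : ℝ)
    (θ : ℕ) (hθ : θ ∈ Finset.Icc 1 S)
    (c : ℕ → ℕ → ℝ) (hc : ∀ s a, c s a = h s + (τ + lam) * (a : ℝ))
    (Jθ : ℝ) (Q : ℕ → ℕ → ℝ)
    (hBell : ∀ s ∈ Finset.Icc 1 S, ∀ a ∈ ({0, 1} : Finset ℕ),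
      Q s a = c s a - Jθ +
        (if a = 1 then
          ρ * Q 1 (pol θ 1) + (1 - ρ) * Q (min (s + 1) S) (pol θ (min (s + 1) S))
        else Q (min (s + 1) S) (pol θ (min (s + 1) S))))
    (Jθ1 : ℝ)
    (hJθ1 : Jθ1 = ∑ z ∈ Finset.Icc 1 S, dstat S ρ (θ + 1) z * c z (pol (θ + 1) z)) :
    Jθ1 - Jθ = dstat S ρ (θ + 1) θ * (Q θ 0 - Q θ 1) := by
  simp only [Finset.mem_Icc] at hθ
  obtain ⟨hθ1, hθS⟩ := hθ
  by_cases hcase : θ = S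
  · rw [hcase]
    have hd : dstat S ρ (S+1) S = 1 := by unfold dstat; rw [if_pos rfl, if_pos rfl]
    have hJ : Jθ1 = c S (pol (S+1) S) := by
      rw [hJθ1, hcase]
      have hterm : ∀ z ∈ Icc 1 S, dstat S ρ (S+1) z * c z (pol (S+1) z)
          = if z = S then c S (pol (S+1) S) else 0 := by
        intro z hz
        unfold dstat; rw [if_pos rfl]
        by_cases hzS : z = S
        · rw [if_pos hzS, if_pos hzS, hzS, one_mul]
        · rw [if_neg hzS, if_neg hzS, zero_mul]
      rw [sum_congr rfl hterm, Finset.sum_ite_eq' (Icc 1 S) S (fun _ => c S (pol (S+1) S)),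
        if_pos (by simp only [mem_Icc]; omega)]
    have hpolS : pol (S+1) S = 0 := by unfold pol; rw [if_neg (by omega)]
    have hpolSS : pol θ S = 1 := by unfold pol; rw [if_pos (by omega)]
    have hb := hBell S (by simp only [Finset.mem_Icc]; omega) 0 (by simp)
    rw [if_neg (by norm_num : ¬ (0:ℕ) = 1), (by omega : min (S+1) S = S), hpolSS] at hb
    rw [hd, hJ, hpolS, one_mul]
    linarith [hb]
  · have hθS' : θ + 1 ≤ S := by omega
    have hkey : ∀ z ∈ Icc 1 S, c z (pol (θ+1) z)
        = Q z (pol (θ+1) z) + Jθ -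
          (if θ+1 ≤ z then ρ * Q 1 (pol θ 1) + (1-ρ) * Q (min (z+1) S) (pol θ (min (z+1) S))
           else Q (min (z+1) S) (pol θ (min (z+1) S))) := by
      intro z hz
      by_cases hcz : θ+1 ≤ z
      · have hp : pol (θ+1) z = 1 := by unfold pol; rw [if_pos hcz]
        have hb := hBell z hz 1 (by simp)
        rw [if_pos rfl] at hb
        rw [hp, if_pos hcz]
        linarith [hb]
      · have hp : pol (θ+1) z = 0 := by unfold pol; rw [if_neg hcz]
        have hb := hBell z hz 0 (by simp)
        rw [if_neg (by norm_num : ¬ (0:ℕ) = 1)] at hb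
        rw [hp, if_neg hcz]
        linarith [hb]
    have hstat : ∑ z ∈ Icc 1 S, dstat S ρ (θ+1) z *
        (if θ+1 ≤ z then ρ * Q 1 (pol θ 1) + (1-ρ) * Q (min (z+1) S) (pol θ (min (z+1) S))
         else Q (min (z+1) S) (pol θ (min (z+1) S)))
        = ∑ z ∈ Icc 1 S, dstat S ρ (θ+1) z * Q z (pol θ z) :=
      stationary S θ hS hθ1 hθS' ρ hρ0 (fun w => Q w (pol θ w))
    have htot := totalsum S θ ρ hρ0 hθ1 hθS'
    have hlast : ∑ z ∈ Icc 1 S,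
        (dstat S ρ (θ+1) z * Q z (pol (θ+1) z) - dstat S ρ (θ+1) z * Q z (pol θ z))
        = dstat S ρ (θ+1) θ * (Q θ 0 - Q θ 1) := by
      rw [Finset.sum_eq_single_of_mem θ (by simp only [mem_Icc]; omega)
        (fun z hz hne => by
          have hp : pol (θ+1) z = pol θ z := by
            unfold pol
            rcases Nat.lt_or_ge z θ with h' | h'
            · rw [if_neg (by omega), if_neg (by omega)]
            · rw [if_pos (by omega), if_pos (by omega)]
          rw [hp, sub_self])]
      have hp1 : pol (θ+1) θ = 0 := by unfold pol; rw [if_neg (by omega)]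
      have hp2 : pol θ θ = 1 := by unfold pol; rw [if_pos le_rfl]
      rw [hp1, hp2]; ring
    have hexp : ∑ z ∈ Icc 1 S, dstat S ρ (θ+1) z *
        (Q z (pol (θ+1) z) + Jθ -
          (if θ+1 ≤ z then ρ * Q 1 (pol θ 1) + (1-ρ) * Q (min (z+1) S) (pol θ (min (z+1) S))
           else Q (min (z+1) S) (pol θ (min (z+1) S))))
        = ∑ z ∈ Icc 1 S, dstat S ρ (θ+1) z * Q z (pol (θ+1) z)
          + (∑ z ∈ Icc 1 S, dstat S ρ (θ+1) z) * Jθ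
          - ∑ z ∈ Icc 1 S, dstat S ρ (θ+1) z *
              (if θ+1 ≤ z then ρ * Q 1 (pol θ 1) + (1-ρ) * Q (min (z+1) S) (pol θ (min (z+1) S))
               else Q (min (z+1) S) (pol θ (min (z+1) S))) := by
      rw [sum_mul, ← sum_add_distrib, ← sum_sub_distrib]
      exact sum_congr rfl fun z _ => by ring
    rw [hJθ1,
      sum_congr rfl (fun z hz => congrArg (HMul.hMul (dstat S ρ (θ+1) z)) (hkey z hz)), hexp, htot, one_mul, hstat, ← hlast, sum_sub_distrib]
    ring
end

section
/- (Structural conditions for threshold optimality.) For the AoI chain, define the tail transition probability T(z | s, a) := Pr(next state ≥ z | current state s, action a) for z, s ∈ {1,…,S} and a ∈ {0,1}. Then: (i) for every fixed z and a, T(z | s, a) is nondecreasing in s; and (ii) for every z ∈ {1,…,S} and every s ∈ {1,…,S−1}, T(z | s+1, 1) − T(z | s, 1) ≤ T(z | s+1, 0) − T(z | s, 0). -/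
/-! Under `a = 1` the kernel is `T(z | s, 1) = ρ·1(z ≤ 1) + (1 - ρ)·T(z | s, 0)`: the reset
term does not depend on `s`, so increments in `s` under `a = 1` are the increments under
`a = 0` damped by the factor `1 - ρ ∈ [0, 1]`, and those are nonnegative because
`min (s + 1) S` is monotone in `s`. -/

open Finset

/-- Tail transition probability T(z | s, a) = Pr(next state ≥ z | s, a) of the
AoI chain: under a = 1 the next state is 1 w.p. ρ and min(s+1,S) w.p. 1-ρ;
under a = 0 it is min(s+1,S). -/
noncomputable def Tker (S : ℕ) (ρ : ℝ) (z s a : ℕ) : ℝ :=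
  if a = 1 then
    ρ * (if 1 ≥ z then 1 else 0) + (1 - ρ) * (if min (s + 1) S ≥ z then 1 else 0)
  else (if min (s + 1) S ≥ z then 1 else 0)

namespace Tker

variable {S : ℕ} {ρ : ℝ} {z : ℕ}

theorem monotone_zero : Monotone fun s => Tker S ρ z s 0 := by
  intro s s' hss
  simp only [Tker, zero_ne_one, if_false]
  split_ifs <;> norm_num
  omega

theorem one_eq (s : ℕ) :
    Tker S ρ z s 1 = ρ * (if 1 ≥ z then 1 else 0) + (1 - ρ) * Tker S ρ z s 0 := by
  simp [Tker]

theorem eq_zero_of_ne_one {a : ℕ} (ha : a ≠ 1) (s : ℕ) : Tker S ρ z s a = Tker S ρ z s 0 := by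
  simp [Tker, ha]

theorem monotone (hρ1 : ρ ≤ 1) (a : ℕ) : Monotone fun s => Tker S ρ z s a := by
  by_cases ha : a = 1
  · subst ha
    intro s s' hss
    have hρ : 0 ≤ 1 - ρ := sub_nonneg.2 hρ1
    simp only [one_eq]
    gcongr
    exact monotone_zero hss
  · simpa only [eq_zero_of_ne_one ha] using monotone_zero

theorem one_sub_one (s s' : ℕ) :
    Tker S ρ z s' 1 - Tker S ρ z s 1 = (1 - ρ) * (Tker S ρ z s' 0 - Tker S ρ z s 0) := by
  rw [one_eq, one_eq]
  ring

theorem one_sub_one_le_zero_sub_zero (hρ0 : 0 ≤ ρ) {s s' : ℕ} (hss : s ≤ s') :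
    Tker S ρ z s' 1 - Tker S ρ z s 1 ≤ Tker S ρ z s' 0 - Tker S ρ z s 0 := by
  rw [one_sub_one]
  exact mul_le_of_le_one_left (sub_nonneg.2 (monotone_zero hss)) (by linarith)

end Tker

theorem tail_kernel_structural_conditions_general
    (S : ℕ) (ρ : ℝ) (hρ0 : 0 < ρ) (hρ1 : ρ ≤ 1) :
    (∀ z ∈ Finset.Icc 1 S, ∀ a ∈ ({0, 1} : Finset ℕ),
      ∀ s ∈ Finset.Icc 1 S, ∀ s' ∈ Finset.Icc 1 S,
        s ≤ s' → Tker S ρ z s a ≤ Tker S ρ z s' a) ∧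
    (∀ z ∈ Finset.Icc 1 S, ∀ s ∈ Finset.Icc 1 (S - 1),
      Tker S ρ z (s + 1) 1 - Tker S ρ z s 1 ≤
        Tker S ρ z (s + 1) 0 - Tker S ρ z s 0) :=
  ⟨fun _ _ a _ _ _ _ _ hss => Tker.monotone hρ1 a hss,
    fun _ _ s _ => Tker.one_sub_one_le_zero_sub_zero hρ0.le (Nat.le_succ s)⟩

/-- Structural conditions for threshold optimality:
(i) T(z|s,a) is nondecreasing in s; (ii) superadditivity-type inequality
T(z|s+1,1) − T(z|s,1) ≤ T(z|s+1,0) − T(z|s,0). -/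
theorem tail_kernel_structural_conditions
    (S : ℕ) (hS : 2 ≤ S) (ρ : ℝ) (hρ0 : 0 < ρ) (hρ1 : ρ ≤ 1) :
    (∀ z ∈ Finset.Icc 1 S, ∀ a ∈ ({0, 1} : Finset ℕ),
      ∀ s ∈ Finset.Icc 1 S, ∀ s' ∈ Finset.Icc 1 S,
        s ≤ s' → Tker S ρ z s a ≤ Tker S ρ z s' a) ∧
    (∀ z ∈ Finset.Icc 1 S, ∀ s ∈ Finset.Icc 1 (S - 1),
      Tker S ρ z (s + 1) 1 - Tker S ρ z s 1 ≤
        Tker S ρ z (s + 1) 0 - Tker S ρ z s 0) :=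
  tail_kernel_structural_conditions_general S ρ hρ0 hρ1
end
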